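/- arXiv:math/0609507 — 3 statements merged into one kernel-verified Lean document; each statement's English description precedes it below -/
import Mathlib

section
/- (Cartan Lemma) Let T be an n-dimensional vector space with basis ω¹,…,ωⁿ of T*, and let η₁,…,ηₙ ∈ T* satisfy Σ_α η_α ∧ ω^α = 0 in Λ²T*. Then there exist scalars q_{αβ} with q_{αβ} = q_{βα} such that η_α = Σ_β q_{αβ} ω^β for all α. -/
/-!
Write `η α = ∑ β, q α β • ω β` in the basis `ω`. Evaluating the relation `∑ α, η α ∧ ω α = 0`
against the dual 2-form `ωⁱ ∧ ωʲ` of the coordinate functionals leaves exactly `q j i - q i j`,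
so `q` is symmetric.
-/

open ExteriorAlgebra

namespace ExteriorAlgebra

variable {R M : Type*} [CommRing R] [AddCommGroup M] [Module R M]

/-- Contraction with `f ∧ g` on `⋀² M`, zero in the other degrees. -/
noncomputable def wedgePairing (f g : Module.Dual R M) : ExteriorAlgebra R M →ₗ[R] R :=
  liftAlternating <| Pi.single 2 <| Matrix.detRowAlternating.compLinearMap (LinearMap.pi ![f, g])

theorem wedgePairing_ι_mul_ι (f g : Module.Dual R M) (x y : M) :
    wedgePairing f g (ι R x * ι R y) = f x * g y - g x * f y := by
  have : ι R x * ι R y = ιMulti R 2 ![x, y] := by simp [ιMulti_apply]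
  rw [this, wedgePairing, liftAlternating_apply_ιMulti, Pi.single_eq_same,
    AlternatingMap.compLinearMap_apply]
  exact (Matrix.det_fin_two _).trans (by simp)

theorem wedgePairing_coord_sum_ι_mul_ι {κ : Type*} [Fintype κ] (b : Module.Basis κ R M)
    (η : κ → M) (i j : κ) :
    wedgePairing (b.coord i) (b.coord j) (∑ α, ι R (η α) * ι R (b α)) =
      b.repr (η j) i - b.repr (η i) j := by
  classical
  simp [wedgePairing_ι_mul_ι, Finsupp.single_apply, mul_ite, Finset.sum_sub_distrib]

end ExteriorAlgebra

theorem Module.Basis.repr_apply_comm_of_sum_ι_mul_ι_eq_zero {R M κ : Type*} [CommRing R]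
    [AddCommGroup M] [Module R M] [Fintype κ] (b : Module.Basis κ R M) {η : κ → M}
    (h : ∑ α, ι R (η α) * ι R (b α) = 0) (i j : κ) : b.repr (η i) j = b.repr (η j) i := by
  have := wedgePairing_coord_sum_ι_mul_ι b η j i
  rw [h, map_zero] at this
  exact sub_eq_zero.mp this.symm

theorem cartan_lemma_general {K : Type*} [Field K]
    {T : Type*} [AddCommGroup T] [Module K T]
    {n : ℕ} (ω : Module.Basis (Fin n) K (Module.Dual K T))
    (η : Fin n → Module.Dual K T)
    (h : ∑ α : Fin n,
        (ExteriorAlgebra.ι K (η α)) * (ExteriorAlgebra.ι K (ω α)) = 0) :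
    ∃ q : Fin n → Fin n → K, (∀ α β, q α β = q β α) ∧
      ∀ α, η α = ∑ β : Fin n, q α β • ω β :=
  ⟨fun α β => ω.repr (η α) β, ω.repr_apply_comm_of_sum_ι_mul_ι_eq_zero h,
    fun α => (ω.sum_repr (η α)).symm⟩

/-- Cartan Lemma: if `ω¹,…,ωⁿ` is a basis of `T*` and `η₁,…,ηₙ ∈ T*` satisfy
`Σ_α η_α ∧ ω^α = 0` in `Λ²T*`, then `η_α = Σ_β q_{αβ} ω^β` with `q_{αβ} = q_{βα}`. -/
theorem cartan_lemma {K : Type*} [Field K] [CharZero K]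
    {T : Type*} [AddCommGroup T] [Module K T] [FiniteDimensional K T]
    {n : ℕ} (ω : Module.Basis (Fin n) K (Module.Dual K T))
    (η : Fin n → Module.Dual K T)
    (h : ∑ α : Fin n,
        (ExteriorAlgebra.ι K (η α)) * (ExteriorAlgebra.ι K (ω α)) = 0) :
    ∃ q : Fin n → Fin n → K, (∀ α β, q α β = q β α) ∧
      ∀ α, η α = ∑ β : Fin n, q α β • ω β :=
  cartan_lemma_general ω η h
end

section
/- Let A ⊂ S²T* be a linear subspace of quadratic forms on a finite-dimensional vector space T over ℂ, and let q ∈ A have maximal rank among elements of A. If u ∈ T satisfies q(u, w) = 0 for all w ∈ T (u is in the singular locus of q), then Q(u, u) = 0 for every Q ∈ A; i.e. u lies in the common zero locus of A. -/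
/-!
Suppose `Q u u ≠ 0`. Pick `w` of length `rank q` on which the Gram matrix of `q` is
nonsingular. On the family `(u, w)` the Gram matrix of `q + t • Q` has first row `t • Q u ·`
and first column `t • Q · u`, because `u` is in the kernel of the symmetric form `q`. Dividing
the first row by `t` and then setting `t = 0` leaves a block triangular matrix with diagonal
blocks `Q u u` and `Gram(q, w)`. So the determinant is `t` times a polynomial that is nonzero
at `0`, and it is nonzero for some `t`. For that `t`, the form `q + t • Q ∈ A` has rank
greater than `rank q`.
-/

open Polynomial Module
open LinearMap (BilinForm)

namespace Matrix

variable {R : Type*} [CommRing R]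

theorem det_eq_mul_det_submatrix_succ_of_col_zero {n : ℕ}
    (A : Matrix (Fin (n + 1)) (Fin (n + 1)) R) (h : ∀ i : Fin n, A i.succ 0 = 0) :
    A.det = A 0 0 * (A.submatrix Fin.succ Fin.succ).det := by
  simp [det_succ_column_zero A, Fin.sum_univ_succ, h, Fin.succAbove_zero]

theorem eval_det_map_add_X_smul {m : Type*} [Fintype m] [DecidableEq m]
    (M₀ M₁ : Matrix m m R) (t : R) :
    (M₀.map C + (X : R[X]) • M₁.map C).det.eval t = (M₀ + t • M₁).det := by
  rw [← coe_evalRingHom, RingHom.map_det]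
  congr 1
  ext i j
  simp only [RingHom.mapMatrix_apply, map_apply, add_apply, smul_apply, coe_evalRingHom,
    eval_add, eval_C, smul_eq_mul, eval_mul, eval_X]

theorem exists_det_add_smul_ne_zero [IsDomain R] [Infinite R] {n : ℕ}
    (M₀ M₁ : Matrix (Fin (n + 1)) (Fin (n + 1)) R) (hrow : M₀ 0 = 0)
    (hcol : ∀ i : Fin n, M₀ i.succ 0 = 0) (h₁ : M₁ 0 0 ≠ 0)
    (hdet : (M₀.submatrix Fin.succ Fin.succ).det ≠ 0) :
    ∃ t : R, (M₀ + t • M₁).det ≠ 0 := by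
  set P := M₀.map C + (X : R[X]) • M₁.map C
  set N := P.updateRow 0 (M₁.map C 0)
  have hfactor : P.det = X * N.det := by
    have hP₀ : P 0 = (X : R[X]) • M₁.map C 0 := by
      ext j
      simp [P, hrow]
    rw [← det_updateRow_smul, ← hP₀, updateRow_eq_self]
  have hN : N.det.eval 0 = M₁ 0 0 * (M₀.submatrix Fin.succ Fin.succ).det := by
    have hN₀ : (evalRingHom 0).mapMatrix N = M₀.updateRow 0 (M₁ 0) := by
      ext i j
      rcases Fin.eq_zero_or_eq_succ i with rfl | ⟨i, rfl⟩ <;> simp [N, P]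
    have hsub : (M₀.updateRow 0 (M₁ 0)).submatrix Fin.succ Fin.succ =
        M₀.submatrix Fin.succ Fin.succ := by
      ext i j
      simp
    rw [← coe_evalRingHom, RingHom.map_det, hN₀,
      det_eq_mul_det_submatrix_succ_of_col_zero _ (by simpa using hcol), hsub]
    simp
  have hP : P.det ≠ 0 := by
    rw [hfactor]
    exact mul_ne_zero X_ne_zero fun h => mul_ne_zero h₁ hdet (by simpa [h] using hN.symm)
  by_contra! h
  exact hP (Polynomial.funext fun t => by simpa [P, eval_det_map_add_X_smul] using h t)

end Matrix

namespace LinearMap.BilinForm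

variable {K V : Type*} [Field K] [AddCommGroup V] [Module K V]

def gramMatrix (B : BilinForm K V) {ι : Type*} (v : ι → V) : Matrix ι ι K :=
  Matrix.of fun i j => B (v i) (v j)

@[simp]
theorem gramMatrix_apply (B : BilinForm K V) {ι : Type*} (v : ι → V) (i j : ι) :
    B.gramMatrix v i j = B (v i) (v j) :=
  rfl

theorem gramMatrix_submatrix (B : BilinForm K V) {ι κ : Type*} (v : ι → V) (f : κ → ι) :
    (B.gramMatrix v).submatrix f f = B.gramMatrix (v ∘ f) :=
  rfl

theorem gramMatrix_add_smul (B B' : BilinForm K V) (t : K) {ι : Type*} (v : ι → V) :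
    (B + t • B').gramMatrix v = B.gramMatrix v + t • B'.gramMatrix v := by
  ext i j
  simp

theorem card_le_finrank_range_of_det_gramMatrix_ne_zero [FiniteDimensional K V]
    (B : BilinForm K V) {ι : Type*} [Fintype ι] [DecidableEq ι] {v : ι → V}
    (h : (B.gramMatrix v).det ≠ 0) : Fintype.card ι ≤ finrank K (range B) := by
  have hli : LinearIndependent K fun i => B (v i) :=
    .of_comp (LinearMap.pi fun j => LinearMap.applyₗ (v j))
      (Matrix.linearIndependent_rows_of_det_ne_zero h)
  have hli' : LinearIndependent K fun i => (⟨B (v i), mem_range_self B (v i)⟩ : range B) :=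
    .of_comp (range B).subtype hli
  simpa using hli'.fintype_card_le_finrank

theorem exists_det_gramMatrix_ne_zero [FiniteDimensional K V] {B : BilinForm K V}
    (hB : B.IsSymm) : ∃ w : Fin (finrank K (range B)) → V, (B.gramMatrix w).det ≠ 0 := by
  obtain ⟨W, hW⟩ := (ker B).exists_isCompl
  have hdim : finrank K W = finrank K (range B) := by
    have := Submodule.finrank_add_eq_of_isCompl hW
    have := B.finrank_range_add_finrank_ker
    omega
  let b := (Module.finBasis K W).reindex (finCongr hdim)
  refine ⟨fun i => b i, fun hdet => ?_⟩
  obtain ⟨c, hc, hmul⟩ := Matrix.exists_mulVec_eq_zero_iff.2 hdet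
  set x : W := ∑ j, c j • b j
  have hbx : ∀ i, B x (b i) = 0 := fun i => by
    rw [hB.eq]
    simpa [x, Matrix.mulVec, dotProduct, mul_comm] using congrFun hmul i
  have hWx : W ≤ ker (B x) := fun y hy => by
    rw [mem_ker, ← Submodule.coe_mk y hy, ← b.sum_repr ⟨y, hy⟩]
    simp only [Submodule.coe_sum, Submodule.coe_smul, map_sum, map_smul, hbx, smul_zero,
      Finset.sum_const_zero]
  have hKx : ker B ≤ ker (B x) := fun k hk => by
    rw [mem_ker, ← hB.eq, show B k = 0 from hk, LinearMap.zero_apply]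
  have hBx : (x : V) ∈ ker B := by
    have := sup_le hKx hWx
    rwa [hW.sup_eq_top, top_le_iff, ker_eq_top] at this
  have hx : x = 0 := Submodule.coe_eq_zero.1 (Submodule.disjoint_def.1 hW.disjoint _ hBx x.2)
  exact hc (funext (Fintype.linearIndependent_iff.1 b.linearIndependent c hx))

end LinearMap.BilinForm

open LinearMap.BilinForm in
/-- Classical Bertini (linear algebra form): if `q` has maximal rank in a linear system
`A ⊂ S²T*` of symmetric bilinear forms and `u` is in the singular locus of `q`, then `u`
is in the common zero locus of `A`. -/
theorem bertini_linear_algebra {T : Type*} [AddCommGroup T] [Module ℂ T]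
    [FiniteDimensional ℂ T]
    (A : Submodule ℂ (LinearMap.BilinForm ℂ T))
    (hsym : ∀ Q ∈ A, ∀ x y : T, Q x y = Q y x)
    (q : LinearMap.BilinForm ℂ T) (hq : q ∈ A)
    (hmax : ∀ q' ∈ A, LinearMap.rank q' ≤ LinearMap.rank q)
    (u : T) (hu : ∀ w : T, q u w = 0) :
    ∀ Q ∈ A, Q u u = 0 := by
  intro Q hQ
  by_contra hQu
  have hqsymm : q.IsSymm := ⟨hsym q hq⟩
  obtain ⟨w, hw⟩ := exists_det_gramMatrix_ne_zero hqsymm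
  let v : Fin (finrank ℂ (LinearMap.range q) + 1) → T := Fin.cons u w
  obtain ⟨t, ht⟩ := Matrix.exists_det_add_smul_ne_zero (q.gramMatrix v) (Q.gramMatrix v)
    (funext fun j => hu (v j)) (fun i => (hqsymm.eq _ u).trans (hu _)) hQu
    (by rwa [gramMatrix_submatrix, Fin.cons_comp_succ])
  rw [← gramMatrix_add_smul] at ht
  have hlower := card_le_finrank_range_of_det_gramMatrix_ne_zero _ ht
  have hupper := hmax _ (A.add_mem hq (A.smul_mem t hQ))
  rw [LinearMap.rank, LinearMap.rank, ← finrank_eq_rank, ← finrank_eq_rank, Nat.cast_le]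
    at hupper
  rw [Fintype.card_fin] at hlower
  omega
end

section
/- Let A ⊂ S²T* be a linear subspace of symmetric bilinear forms on an n-dimensional complex vector space T, and suppose every element of A has rank at most r. Then for any q ∈ A of rank exactly r, the kernel K = {v : q(v,·)=0} (of dimension n - r) satisfies: for all Q ∈ A and all u, v ∈ K, Q(u, v) = 0. -/
/-!
Suppose `u ∈ ker q` had `Q u u ≠ 0`. Take `w₁, …, w_r` spanning a complement of `ker q`, so that
the Gram matrix of `q` on `w` is invertible. On the family `w₁, …, w_r, u` the Gram matrix of
`q + t • Q` is `G₀ + t • G₁`, where `G₀` is that invertible block bordered by zeros and the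
corner of `G₁` is `Q u u`. Its determinant is `t` times a continuous function of `t` whose value
at `0` is `det (q(wᵢ, wⱼ)) · Q u u ≠ 0`, so it is nonzero for small `t ≠ 0`. Then
`q + t • Q ∈ A` has rank at least `r + 1`, a contradiction. Hence `Q` vanishes on the diagonal
of `ker q`, and polarization finishes the proof.
-/

open Matrix Filter Topology Module

theorem LinearMap.linearIndependent_of_det_ne_zero {K M N ι : Type*} [Field K]
    [AddCommGroup M] [Module K M] [AddCommGroup N] [Module K N] [Fintype ι] [DecidableEq ι]
    (B : M →ₗ[K] N →ₗ[K] K) (v : ι → M) (w : ι → N)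
    (h : (Matrix.of fun i j => B (v i) (w j)).det ≠ 0) :
    LinearIndependent K (B ∘ v) :=
  .of_comp (LinearMap.pi fun j => LinearMap.applyₗ (w j))
    (Matrix.linearIndependent_rows_of_det_ne_zero h)

theorem LinearMap.card_le_rank_of_det_ne_zero {K M N ι : Type*} [Field K]
    [AddCommGroup M] [Module K M] [AddCommGroup N] [Module K N] [Fintype ι] [DecidableEq ι]
    (B : M →ₗ[K] N →ₗ[K] K) (v : ι → M) (w : ι → N)
    (h : (Matrix.of fun i j => B (v i) (w j)).det ≠ 0) :
    (Fintype.card ι : Cardinal) ≤ B.rank := by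
  have hv : LinearIndependent K fun i => (⟨B (v i), v i, rfl⟩ : LinearMap.range B) :=
    .of_comp (LinearMap.range B).subtype (B.linearIndependent_of_det_ne_zero v w h)
  simpa using hv.cardinal_lift_le_rank

theorem Matrix.exists_det_add_smul_ne_zero_s8 {𝕜 ι : Type*} [NontriviallyNormedField 𝕜]
    [Fintype ι] [DecidableEq ι] (G₀ G₁ : Matrix (ι ⊕ Unit) (ι ⊕ Unit) 𝕜)
    (hrow : G₀ (.inr ()) = 0) (hcol : ∀ i, G₀ i (.inr ()) = 0) (hN : G₀.toBlocks₁₁.det ≠ 0)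
    (hc : G₁ (.inr ()) (.inr ()) ≠ 0) :
    ∃ t : 𝕜, (G₀ + t • G₁).det ≠ 0 := by
  set f : 𝕜 → 𝕜 := fun t => ((G₀ + t • G₁).updateRow (.inr ()) (G₁ (.inr ()))).det
  have hfactor (t : 𝕜) : (G₀ + t • G₁).det = t * f t := by
    have hlast : (G₀ + t • G₁) (.inr ()) = t • G₁ (.inr ()) := by
      funext j; simp [congrFun hrow j]
    rw [← det_updateRow_smul, ← hlast, updateRow_eq_self]
  have hf₀ : f 0 = G₀.toBlocks₁₁.det * G₁ (.inr ()) (.inr ()) := by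
    have h₁₂ : (G₀.updateRow (.inr ()) (G₁ (.inr ()))).toBlocks₁₂ = 0 := by
      ext i j; simp [toBlocks₁₂, hcol]
    simp only [f, zero_smul, add_zero]
    rw [← fromBlocks_toBlocks (G₀.updateRow _ _), h₁₂, det_fromBlocks_zero₁₂,
      det_unique (toBlocks₂₂ _)]
    simp [toBlocks₁₁, toBlocks₂₂]
  have hf : Continuous f := by fun_prop
  have hnear : ∀ᶠ t in 𝓝[≠] 0, t ≠ 0 ∧ f t ≠ 0 :=
    eventually_mem_nhdsWithin.and <| nhdsWithin_le_nhds <|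
      hf.continuousAt.eventually_ne (hf₀ ▸ mul_ne_zero hN hc)
  obtain ⟨t, ht, hft⟩ := hnear.exists
  exact ⟨t, hfactor t ▸ mul_ne_zero ht hft⟩

namespace LinearMap.BilinForm

theorem exists_det_gram_ne_zero {K M : Type*} [Field K] [AddCommGroup M] [Module K M]
    [FiniteDimensional K M] (B : LinearMap.BilinForm K M) (hB : ∀ x y, B x y = B y x) :
    ∃ w : Fin (finrank K (LinearMap.range B)) → M,
      (Matrix.of fun i j => B (w i) (w j)).det ≠ 0 := by
  obtain ⟨W, hW⟩ := (LinearMap.ker B).exists_isCompl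
  have hdim : finrank K W = finrank K (LinearMap.range B) := by
    have := Submodule.finrank_add_eq_of_isCompl hW
    have := B.finrank_range_add_finrank_ker
    omega
  let b := finBasisOfFinrankEq K W hdim
  have hnd : (B.domRestrict₁₂ W W).Nondegenerate :=
    (LinearMap.isSymm_def.mpr hB).nondegenerate_restrict_of_isCompl_ker hW.symm
  refine ⟨fun i => b i, ?_⟩
  convert (nondegenerate_iff_det_ne_zero b).mp hnd using 2
  ext i j
  simp [toMatrix_apply, domRestrict₁₂_apply]

theorem apply_self_eq_zero_of_mem_ker_of_rank_add_smul_le {𝕜 M : Type*}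
    [NontriviallyNormedField 𝕜] [AddCommGroup M] [Module 𝕜 M] [FiniteDimensional 𝕜 M]
    (q Q : LinearMap.BilinForm 𝕜 M) (hq : ∀ x y, q x y = q y x)
    (hpencil : ∀ t : 𝕜, (q + t • Q).rank ≤ q.rank) {u : M} (hu : u ∈ LinearMap.ker q) :
    Q u u = 0 := by
  by_contra hQu
  rw [LinearMap.mem_ker] at hu
  set r := finrank 𝕜 (LinearMap.range q)
  obtain ⟨w, hw⟩ := q.exists_det_gram_ne_zero hq
  set v : Fin r ⊕ Unit → M := Sum.elim w fun _ => u
  obtain ⟨t, ht⟩ := exists_det_add_smul_ne_zero_s8 (Matrix.of fun i j => q (v i) (v j))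
    (Matrix.of fun i j => Q (v i) (v j)) (by ext j; simp [v, hu])
    (fun i => by simp [v, hq _ u, hu]) hw hQu
  have hgram : (Matrix.of fun i j => (q + t • Q) (v i) (v j)) =
      Matrix.of (fun i j => q (v i) (v j)) + t • Matrix.of fun i j => Q (v i) (v j) := by
    ext i j; simp
  have hle := ((q + t • Q).card_le_rank_of_det_ne_zero v v (hgram ▸ ht)).trans (hpencil t)
  rw [show q.rank = r from (finrank_eq_rank 𝕜 _).symm, Fintype.card_sum, Fintype.card_fin, Fintype.card_unit] at hle
  exact (Nat.lt_succ_self r).not_ge (by exact_mod_cast hle)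

theorem apply_eq_zero_of_apply_self_eq_zero {R M : Type*} [CommRing R] [NoZeroDivisors R]
    [CharZero R] [AddCommGroup M] [Module R M] (B : LinearMap.BilinForm R M)
    (hB : ∀ x y, B x y = B y x) {S : Submodule R M} (hS : ∀ x ∈ S, B x x = 0) {x y : M}
    (hx : x ∈ S) (hy : y ∈ S) : B x y = 0 := by
  have hpolar := hS (x + y) (S.add_mem hx hy)
  simp only [map_add, LinearMap.add_apply, hS x hx, hS y hy, hB y x] at hpolar
  exact add_self_eq_zero.mp (by simpa using hpolar)

end LinearMap.BilinForm

/-- Mobile Bertini, key linear-algebra step: in a linear system `A ⊂ S²T*` of symmetric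
bilinear forms on an `n`-dimensional space, all of rank `≤ r`, the kernel `K` of an
element `q` of rank exactly `r` (of dimension `n - r`) is isotropic for every `Q ∈ A`. -/
theorem mobile_bertini_isotropic {T : Type*} [AddCommGroup T] [Module ℂ T]
    [FiniteDimensional ℂ T] {n r : ℕ} (hn : Module.finrank ℂ T = n)
    (A : Submodule ℂ (LinearMap.BilinForm ℂ T))
    (hsym : ∀ Q ∈ A, ∀ x y : T, Q x y = Q y x)
    (hrank : ∀ Q ∈ A, LinearMap.rank Q ≤ (r : Cardinal))
    (q : LinearMap.BilinForm ℂ T) (hq : q ∈ A)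
    (hqr : LinearMap.rank q = (r : Cardinal)) :
    Module.finrank ℂ (LinearMap.ker q) = n - r ∧
    ∀ Q ∈ A, ∀ u ∈ LinearMap.ker q, ∀ v ∈ LinearMap.ker q, Q u v = 0 := by
  have hr : finrank ℂ (LinearMap.range q) = r := finrank_eq_of_rank_eq hqr
  refine ⟨by have := q.finrank_range_add_finrank_ker; omega, fun Q hQ u hu v hv => ?_⟩
  refine Q.apply_eq_zero_of_apply_self_eq_zero (hsym Q hQ) (fun x hx => ?_) hu hv
  exact q.apply_self_eq_zero_of_mem_ker_of_rank_add_smul_le Q (hsym q hq)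
    (fun t => hqr ▸ hrank _ (A.add_mem hq (A.smul_mem t hQ))) hx
end
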